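/- An implicative involutive BE algebra X is an implicative-orthomodular lattice if and only if the commutativity relation C is symmetric: whenever x = (x → y*) → (x → y)* then y = (y → x*) → (y → x)*. -/
import Mathlib


class InvBE (X : Type*) where
  imp : X → X → X
  one : X
  zero : X
  imp_self : ∀ x, imp x x = one
  imp_one : ∀ x, imp x one = one
  one_imp : ∀ x, imp one x = x
  exch : ∀ x y z, imp x (imp y z) = imp y (imp x z)
  zero_imp : ∀ x, imp zero x = one
  invol : ∀ x, imp (imp x zero) zero = x

namespace InvBE

variable {X : Type*} [InvBE X]

/-- `x* = x → 0` -/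
def star (x : X) : X := imp x zero

/-- `x ⊔ y = (x → y) → y` -/
def sup (x y : X) : X := imp (imp x y) y

/-- `x ⊓ y = ((x* → y*) → y*)*` -/
def inf (x y : X) : X := star (imp (imp (star x) (star y)) (star y))

/-- `x ≤_L y` iff `x = (x → y*)*` -/
def leL (x y : X) : Prop := x = star (imp x (star y))

/-- `x ≤_Q y` iff `x = x ⊓ y` -/
def leQ (x y : X) : Prop := x = inf x y

/-- `x C y` iff `x = (x → y*) → (x → y)*` -/
def Comm (x y : X) : Prop := x = imp (imp x (star y)) (star (imp x y))

/-- divisibility condition for the pair `(x, y)`: `x → (x → y)* = x → y*` -/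
def Idiv (x y : X) : Prop := imp x (star (imp x y)) = imp x (star y)

/-- `Idis₁`: `((x* → y) → z*)* = (x → z*) → (y → z*)*` -/
def Idis1 (x y z : X) : Prop :=
  star (imp (imp (star x) y) (star z)) = imp (imp x (star z)) (star (imp y (star z)))

/-- `Idis₂`: `((x → y*) → z)* = (z* → x) → (z* → y)*` -/
def Idis2 (x y z : X) : Prop :=
  star (imp (imp x (star y)) z) = imp (imp (star z) x) (star (imp (star z) y))

/-- a triple is distributive if all its permutations satisfy `Idis₁` and `Idis₂` -/
def DistribTriple (x y z : X) : Prop :=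
  Idis1 x y z ∧ Idis1 x z y ∧ Idis1 y x z ∧ Idis1 y z x ∧ Idis1 z x y ∧ Idis1 z y x ∧
  Idis2 x y z ∧ Idis2 x z y ∧ Idis2 y x z ∧ Idis2 y z x ∧ Idis2 z x y ∧ Idis2 z y x

end InvBE

/-- implicative involutive BE algebra: `(x → y) → x = x` -/
class ImplInvBE (X : Type*) extends InvBE X where
  impl : ∀ x y, imp (imp x y) x = x

/-- implicative-orthomodular lattice: `x ⊓ (y → x) = x` -/
class IOML (X : Type*) extends ImplInvBE X where
  iom : ∀ x y, InvBE.inf x (imp y x) = x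

open InvBE

namespace IOMLproof

variable {X : Type*} [ImplInvBE X]

open InvBE

lemma contrap (a b : X) : imp a (star b) = imp b (star a) :=
  InvBE.exch a b InvBE.zero

lemma starstar (a : X) : star (star a) = a := InvBE.invol a

lemma contrap2 (a b : X) : imp (star a) (star b) = imp b a := by
  rw [contrap (star a) b, starstar]

lemma peirce (a b : X) : imp (imp a b) a = a := ImplInvBE.impl a b

lemma aux1 (x y : X) : imp (imp y x) (star x) = star x := by
  rw [← contrap2 x y, peirce]

lemma star_one : star (InvBE.one : X) = InvBE.zero := InvBE.one_imp _

lemma commA (x y : X) : Comm x (imp y x) := by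
  unfold Comm
  have h1 : imp x (imp y x) = InvBE.one := by
    rw [InvBE.exch, InvBE.imp_self, InvBE.imp_one]
  rw [h1, star_one, contrap x (imp y x), aux1]
  show x = star (star x)
  rw [starstar]

/-- from symmetry of C we get `((q→p)→p)→p = q→p` -/
lemma Tgen (hsym : ∀ x y : X, Comm x y → Comm y x) (p q : X) :
    imp (imp (imp q p) p) p = imp q p := by
  have h := hsym p (imp q p) (commA p q)
  unfold Comm at h
  rw [aux1] at h
  rw [← contrap2 p (imp (imp q p) p)]
  exact h.symm

end IOMLproof

open IOMLproof

theorem stmt12 {X : Type*} [ImplInvBE X] :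
    (∀ x y : X, inf x (imp y x) = x) ↔ (∀ x y : X, Comm x y → Comm y x) := by
  constructor
  · intro hiom x y hc
    unfold Comm at hc ⊢
    set t := imp x (star y) with ht
    -- hP : y → (x→y)* = y*
    have hP : imp y (star (imp x y)) = star y := by
      rw [contrap y (imp x y), ← contrap2 y x]
      exact peirce _ _
    -- hu : y → x = t → y*
    have hu : imp y x = imp t (star y) := by
      calc imp y x = imp y (imp t (star (imp x y))) := by conv_lhs => rw [hc]
        _ = imp t (imp y (star (imp x y))) := InvBE.exch _ _ _
        _ = imp t (star y) := by rw [hP]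
    -- I-instance from iom at (star y, x)
    have hI := hiom (star y) x
    unfold inf at hI
    rw [starstar, ← ht] at hI
    have hE : imp (imp y (star t)) (star t) = y := by
      have h2 := congrArg InvBE.star hI
      rwa [starstar, starstar] at h2
    rw [contrap y x, ← ht, hu, contrap t (imp t (star y)), ← contrap y t]
    exact hE.symm
  · intro hsym x y
    unfold inf
    set a := imp y x with ha
    rw [contrap2 x a]
    have hxa : imp x (star a) = star x := by rw [contrap, ha, aux1]
    have key : imp (imp a x) (star a) = star x := by
      have h := Tgen hsym (star a) x
      rw [hxa, contrap2 x a] at h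
      exact h
    rw [key, starstar]
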